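/- arXiv:1611.08105 — 4 statements merged into one kernel-verified Lean document; each statement's English description precedes it below -/
import Mathlib

section
/- Let X be a finite-dimensional Hilbert space, t ∈ [0,T], E(t,·) ∈ C¹(X), and let θ : (a,b) → X be locally Lipschitz with θ(s) not a critical point of E(t,·) for all s ∈ (a,b), and suppose there exists a measurable λ : (a,b) → (0,∞) with λ(s)θ'(s) + DE(t,θ(s)) = 0 for a.e. s, where λ(s) ≥ λ_ρ > 0 on each compact subinterval [a+ρ, b−ρ]. Then the time change σ(s) := ∫_{s̄}^s 1/λ(r) dr (for fixed s̄ ∈ (a,b)) is locally Lipschitz, strictly increasing, and its inverse 𝔰 satisfies 𝔰'(σ) = λ(𝔰(σ)) a.e.; moreover the reparameterized curve θ̃(σ) := θ(𝔰(σ)) is locally absolutely continuous and solves the gradient flow equation θ̃'(σ) + DE(t, θ̃(σ)) = 0 for a.e. σ in the (possibly unbounded) interval (σ(a), σ(b)). -/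
open MeasureTheory Filter Set intervalIntegral Function Topology

/-!
Since `1/λ` is positive and bounded on compact subintervals of `(a,b)`, its primitive `σ` is
locally Lipschitz and strictly increasing, and by Lebesgue's differentiation theorem `σ' = 1/λ`
almost everywhere. Hence the inverse `𝔰` of `σ` is continuous, and at each `σ(s)` such that
`σ'(s) = 1/λ(s)`, `θ'(s)` exists and `λ(s) θ'(s) + DE(θ(s)) = 0`, the inverse function theorem
and the chain rule give `𝔰'(σ(s)) = λ(s)` and `(θ ∘ 𝔰)'(σ(s)) = λ(s) θ'(s) = -DE(θ(s))`.
The remaining `s` form a null set, and a locally Lipschitz map sends null sets to null sets, so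
these identities hold for almost every `τ ∈ σ(a,b)`.
-/

lemma Ioo_subset_iUnion_Icc_rat (a b : ℝ) :
    Ioo a b ⊆ ⋃ q : {q : ℚ × ℚ // a < q.1 ∧ (q.1 : ℝ) ≤ q.2 ∧ (q.2 : ℝ) < b},
      Icc (q.1.1 : ℝ) q.1.2 := by
  intro s hs
  obtain ⟨c, hac, hcs⟩ := exists_rat_btwn hs.1
  obtain ⟨d, hsd, hdb⟩ := exists_rat_btwn hs.2
  exact mem_iUnion.2 ⟨⟨(c, d), hac, hcs.le.trans hsd.le, hdb⟩, hcs.le, hsd.le⟩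

lemma ae_restrict_Ioo_of_forall_Icc {p : ℝ → Prop} {a b : ℝ}
    (h : ∀ c d, a < c → c ≤ d → d < b → ∀ᵐ x ∂volume.restrict (Icc c d), p x) :
    ∀ᵐ x ∂volume.restrict (Ioo a b), p x :=
  ae_restrict_of_ae_restrict_of_subset (Ioo_subset_iUnion_Icc_rat a b)
    ((ae_restrict_iUnion_iff _ _).2 fun q => h _ _ q.2.1 q.2.2.1 q.2.2.2)

lemma LipschitzOnWith.volume_image_null {f : ℝ → ℝ} {K : NNReal} {s : Set ℝ}
    (hf : LipschitzOnWith K f s) (hs : volume s = 0) : volume (f '' s) = 0 := by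
  have h := hf.hausdorffMeasure_image_le (d := 1) zero_le_one
  rw [hausdorffMeasure_real, ENNReal.rpow_one, hs, mul_zero] at h
  exact le_antisymm h zero_le

section LocallyLipschitz

variable {f : ℝ → ℝ} {a b : ℝ}

lemma continuousOn_Ioo_of_lipschitzOnWith_Icc
    (hf : ∀ c d, a < c → c ≤ d → d < b → ∃ K : NNReal, LipschitzOnWith K f (Icc c d)) :
    ContinuousOn f (Ioo a b) := by
  intro s hs
  obtain ⟨c, hac, hcs⟩ := exists_between hs.1
  obtain ⟨d, hsd, hdb⟩ := exists_between hs.2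
  obtain ⟨K, hK⟩ := hf c d hac (hcs.le.trans hsd.le) hdb
  exact (hK.continuousOn.continuousAt (Icc_mem_nhds hcs hsd)).continuousWithinAt

lemma volume_image_null_of_lipschitzOnWith_Icc
    (hf : ∀ c d, a < c → c ≤ d → d < b → ∃ K : NNReal, LipschitzOnWith K f (Icc c d))
    {N : Set ℝ} (hN : N ⊆ Ioo a b) (h0 : volume N = 0) : volume (f '' N) = 0 := by
  have hcover := image_mono (f := f)
    (subset_inter subset_rfl (hN.trans (Ioo_subset_iUnion_Icc_rat a b)))
  rw [inter_iUnion, image_iUnion] at hcover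
  refine measure_mono_null hcover (measure_iUnion_null fun q => ?_)
  obtain ⟨K, hK⟩ := hf _ _ q.2.1 q.2.2.1 q.2.2.2
  exact (hK.mono inter_subset_right).volume_image_null (measure_mono_null inter_subset_left h0)

lemma ae_exists_preimage_of_lipschitzOnWith_Icc
    (hf : ∀ c d, a < c → c ≤ d → d < b → ∃ K : NNReal, LipschitzOnWith K f (Icc c d))
    {p : ℝ → Prop} (hp : ∀ᵐ s ∂volume.restrict (Ioo a b), p s) :
    ∀ᵐ τ, τ ∈ f '' Ioo a b → ∃ s ∈ Ioo a b, p s ∧ f s = τ := by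
  have hN : volume {s | s ∈ Ioo a b ∧ ¬p s} = 0 := by
    simpa only [ae_iff, Classical.not_imp] using (ae_restrict_iff' measurableSet_Ioo).1 hp
  filter_upwards [measure_eq_zero_iff_ae_notMem.1
    (volume_image_null_of_lipschitzOnWith_Icc hf (fun s hs => hs.1) hN)]
    with τ hτ ⟨s, hs, hsτ⟩
  exact ⟨s, hs, by_contra fun h => hτ ⟨s, ⟨hs, h⟩, hsτ⟩, hsτ⟩

end LocallyLipschitz

section Primitive

variable {g σ : ℝ → ℝ} {a b sbar : ℝ}

lemma intervalIntegrable_of_bounded_on_Icc (hg : AEStronglyMeasurable g volume)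
    (hbdd : ∀ c d, a < c → c ≤ d → d < b → ∃ M, ∀ s ∈ Icc c d, |g s| ≤ M)
    {u v : ℝ} (hu : u ∈ Ioo a b) (hv : v ∈ Ioo a b) : IntervalIntegrable g volume u v := by
  obtain ⟨M, hM⟩ := hbdd (min u v) (max u v) (lt_min hu.1 hv.1) min_le_max (max_lt hu.2 hv.2)
  refine (intervalIntegrable_const (c := M)).mono_fun' hg.restrict ?_
  filter_upwards [ae_restrict_mem measurableSet_uIoc] with x hx
  exact hM x (uIoc_subset_uIcc hx)

lemma sub_eq_integral_of_eq_integral (hsbar : sbar ∈ Ioo a b)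
    (hint : ∀ u ∈ Ioo a b, ∀ v ∈ Ioo a b, IntervalIntegrable g volume u v)
    (hσ : ∀ s ∈ Ioo a b, σ s = ∫ r in sbar..s, g r) {u v : ℝ} (hu : u ∈ Ioo a b)
    (hv : v ∈ Ioo a b) : σ v - σ u = ∫ r in u..v, g r := by
  rw [hσ v hv, hσ u hu, integral_interval_sub_left (hint _ hsbar _ hv) (hint _ hsbar _ hu)]

lemma lipschitzOnWith_Icc_of_eq_integral (hsbar : sbar ∈ Ioo a b)
    (hint : ∀ u ∈ Ioo a b, ∀ v ∈ Ioo a b, IntervalIntegrable g volume u v)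
    (hσ : ∀ s ∈ Ioo a b, σ s = ∫ r in sbar..s, g r)
    (hbdd : ∀ c d, a < c → c ≤ d → d < b → ∃ M, ∀ s ∈ Icc c d, |g s| ≤ M) :
    ∀ c d, a < c → c ≤ d → d < b → ∃ K : NNReal, LipschitzOnWith K σ (Icc c d) := by
  intro c d hac hcd hdb
  obtain ⟨M, hM⟩ := hbdd c d hac hcd hdb
  have hsub : Icc c d ⊆ Ioo a b := Icc_subset_Ioo hac hdb
  refine ⟨Real.toNNReal M, LipschitzOnWith.of_dist_le_mul fun x hx y hy => ?_⟩
  rw [Real.dist_eq, Real.dist_eq,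
    sub_eq_integral_of_eq_integral hsbar hint hσ (hsub hy) (hsub hx), ← Real.norm_eq_abs]
  refine (intervalIntegral.norm_integral_le_of_norm_le_const fun r hr => ?_).trans
    (mul_le_mul_of_nonneg_right (Real.le_coe_toNNReal M) (abs_nonneg _))
  exact hM r (ordConnected_Icc.uIcc_subset hy hx (uIoc_subset_uIcc hr))

lemma strictMonoOn_of_eq_integral (hsbar : sbar ∈ Ioo a b)
    (hint : ∀ u ∈ Ioo a b, ∀ v ∈ Ioo a b, IntervalIntegrable g volume u v)
    (hσ : ∀ s ∈ Ioo a b, σ s = ∫ r in sbar..s, g r) (hpos : ∀ s ∈ Ioo a b, 0 < g s) :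
    StrictMonoOn σ (Ioo a b) := by
  intro u hu v hv huv
  have h := intervalIntegral_pos_of_pos_on (hint u hu v hv)
    (fun r hr => hpos r ⟨hu.1.trans hr.1, hr.2.trans hv.2⟩) huv
  linarith [sub_eq_integral_of_eq_integral hsbar hint hσ hu hv]

lemma ae_hasDerivAt_of_eq_integral (hsbar : sbar ∈ Ioo a b)
    (hint : ∀ u ∈ Ioo a b, ∀ v ∈ Ioo a b, IntervalIntegrable g volume u v)
    (hσ : ∀ s ∈ Ioo a b, σ s = ∫ r in sbar..s, g r) :
    ∀ᵐ s ∂volume.restrict (Ioo a b), HasDerivAt σ (g s) s := by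
  refine ae_restrict_Ioo_of_forall_Icc fun c d hac hcd hdb => ?_
  have hc : c ∈ Ioo a b := ⟨hac, hcd.trans_lt hdb⟩
  have hd : d ∈ Ioo a b := ⟨hac.trans_le hcd, hdb⟩
  have hder := (hint c hc d hd).ae_hasDerivAt_integral
  rw [uIcc_of_le hcd] at hder
  filter_upwards [ae_restrict_of_ae hder, ae_restrict_mem measurableSet_Icc] with x hx hxcd
  have hσ_eq : σ =ᶠ[𝓝 x] fun y => σ c + ∫ r in c..y, g r := by
    filter_upwards [Ioo_mem_nhds (hac.trans_le hxcd.1) (hxcd.2.trans_lt hdb)] with y hy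
    linarith [sub_eq_integral_of_eq_integral hsbar hint hσ hc hy]
  exact ((hx hxcd c (left_mem_Icc.2 hcd)).const_add (σ c)).congr_of_eventuallyEq hσ_eq

end Primitive

lemma StrictMonoOn.monotoneOn_invFunOn {α β : Type*} [LinearOrder α] [Preorder β] [Nonempty α]
    {f : α → β} {s : Set α} (hf : StrictMonoOn f s) : MonotoneOn (invFunOn f s) (f '' s) := by
  rintro _ ⟨x, hx, rfl⟩ _ ⟨y, hy, rfl⟩ hxy
  rw [hf.injOn.leftInvOn_invFunOn hx, hf.injOn.leftInvOn_invFunOn hy]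
  exact (hf.le_iff_le hx hy).1 hxy

section Inverse

variable {α β : Type*} [ConditionallyCompleteLinearOrder α] [TopologicalSpace α] [OrderTopology α]
  [DenselyOrdered α] [LinearOrder β] [TopologicalSpace β] [OrderTopology β]
  {f : α → β} {a b s : α}

lemma StrictMonoOn.image_Ioo_mem_nhds (hmono : StrictMonoOn f (Ioo a b))
    (hcont : ContinuousOn f (Ioo a b)) (hs : s ∈ Ioo a b) : f '' Ioo a b ∈ 𝓝 (f s) := by
  obtain ⟨c, hac, hcs⟩ := exists_between hs.1
  obtain ⟨d, hsd, hdb⟩ := exists_between hs.2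
  have hsub : Icc c d ⊆ Ioo a b := Icc_subset_Ioo hac hdb
  have himage : f '' Ioo c d = Ioo (f c) (f d) :=
    (hcont.mono hsub).image_Ioo_of_strictMonoOn (hcs.le.trans hsd.le) (hmono.mono hsub)
  refine mem_of_superset (Ioo_mem_nhds (hmono (hsub ⟨le_rfl, (hcs.trans hsd).le⟩) hs hcs)
    (hmono hs (hsub ⟨(hcs.trans hsd).le, le_rfl⟩) hsd)) ?_
  rw [← himage]
  exact image_mono (Ioo_subset_Ioo hac.le hdb.le)

lemma StrictMonoOn.isOpen_image_Ioo (hmono : StrictMonoOn f (Ioo a b))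
    (hcont : ContinuousOn f (Ioo a b)) : IsOpen (f '' Ioo a b) :=
  isOpen_iff_mem_nhds.2 fun _ ⟨_, hs, hfs⟩ => hfs ▸ hmono.image_Ioo_mem_nhds hcont hs

lemma StrictMonoOn.continuousAt_invFunOn (hmono : StrictMonoOn f (Ioo a b))
    (hcont : ContinuousOn f (Ioo a b)) (hs : s ∈ Ioo a b) :
    ContinuousAt (invFunOn f (Ioo a b)) (f s) := by
  have hleft := hmono.injOn.leftInvOn_invFunOn
  refine continuousAt_of_monotoneOn_of_image_mem_nhds hmono.monotoneOn_invFunOn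
    (hmono.image_Ioo_mem_nhds hcont hs) ?_
  rw [hleft.image_image, hleft hs]
  exact Ioo_mem_nhds hs.1 hs.2

end Inverse

lemma StrictMonoOn.hasDerivAt_invFunOn {f : ℝ → ℝ} {a b s f' : ℝ}
    (hmono : StrictMonoOn f (Ioo a b)) (hcont : ContinuousOn f (Ioo a b)) (hs : s ∈ Ioo a b)
    (hf : HasDerivAt f f' s) (hf' : f' ≠ 0) : HasDerivAt (invFunOn f (Ioo a b)) f'⁻¹ (f s) := by
  refine HasDerivAt.of_local_left_inverse (hmono.continuousAt_invFunOn hcont hs)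
    ((hmono.injOn.leftInvOn_invFunOn hs).symm ▸ hf) hf' ?_
  filter_upwards [hmono.image_Ioo_mem_nhds hcont hs] with y hy
  exact (surjOn_image f _).rightInvOn_invFunOn hy

lemma StrictMonoOn.hasDerivAt_comp_invFunOn {F : Type*} [NormedAddCommGroup F] [NormedSpace ℝ F]
    {f : ℝ → ℝ} {θ : ℝ → F} {a b s f' : ℝ} {v : F}
    (hmono : StrictMonoOn f (Ioo a b)) (hcont : ContinuousOn f (Ioo a b)) (hs : s ∈ Ioo a b)
    (hf : HasDerivAt f f' s) (hf' : f' ≠ 0) (hθ : HasDerivAt θ v s) :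
    HasDerivAt (fun τ => θ (invFunOn f (Ioo a b) τ)) (f'⁻¹ • v) (f s) := by
  have hθ' : HasDerivAt θ v (invFunOn f (Ioo a b) (f s)) := by
    rwa [hmono.injOn.leftInvOn_invFunOn hs]
  exact hθ'.scomp (f s) (hmono.hasDerivAt_invFunOn hcont hs hf hf')

lemma exists_abs_one_div_le_on_Icc {lam : ℝ → ℝ} {a b : ℝ}
    (hlamlb : ∀ ρ > 0, a + ρ ≤ b - ρ → ∃ lamρ > 0, ∀ s ∈ Icc (a + ρ) (b - ρ), lamρ ≤ lam s)
    (c d : ℝ) (hac : a < c) (hcd : c ≤ d) (hdb : d < b) :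
    ∃ M, ∀ s ∈ Icc c d, |1 / lam s| ≤ M := by
  set ρ := min (c - a) (b - d)
  have hρc : a + ρ ≤ c := by linarith [min_le_left (c - a) (b - d)]
  have hρd : d ≤ b - ρ := by linarith [min_le_right (c - a) (b - d)]
  obtain ⟨m, hm, hle⟩ := hlamlb ρ (lt_min (sub_pos.2 hac) (sub_pos.2 hdb)) (by linarith)
  refine ⟨1 / m, fun s hs => ?_⟩
  have hms : m ≤ lam s := hle s (Icc_subset_Icc hρc hρd hs)
  rw [abs_of_pos (one_div_pos.2 (hm.trans_le hms))]
  exact one_div_le_one_div_of_le hm hms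

theorem stmt8_general
    {X : Type*} [NormedAddCommGroup X] [InnerProductSpace ℝ X] [FiniteDimensional ℝ X]
    (E : X → ℝ)
    (a b : ℝ) (θ θ' : ℝ → X)
    (hθderiv : ∀ᵐ s ∂(volume.restrict (Set.Ioo a b)), HasDerivAt θ (θ' s) s)
    (lam : ℝ → ℝ) (hlammeas : Measurable lam)
    (hlampos : ∀ s ∈ Set.Ioo a b, 0 < lam s)
    (hlamlb : ∀ ρ > 0, a + ρ ≤ b - ρ →
      ∃ lamρ > 0, ∀ s ∈ Set.Icc (a + ρ) (b - ρ), lamρ ≤ lam s)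
    (hflow : ∀ᵐ s ∂(volume.restrict (Set.Ioo a b)),
      lam s • θ' s + gradient E (θ s) = 0)
    (sbar : ℝ) (hsbar : sbar ∈ Set.Ioo a b)
    (σ : ℝ → ℝ) (hσ : ∀ s ∈ Set.Ioo a b, σ s = ∫ r in sbar..s, 1 / lam r) :
    (∀ c d : ℝ, a < c → c ≤ d → d < b → ∃ K : NNReal,
      LipschitzOnWith K σ (Set.Icc c d)) ∧
    StrictMonoOn σ (Set.Ioo a b) ∧
    ∃ 𝔰 : ℝ → ℝ,
      (∀ s ∈ Set.Ioo a b, 𝔰 (σ s) = s) ∧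
      Set.MapsTo 𝔰 (σ '' Set.Ioo a b) (Set.Ioo a b) ∧
      (∀ᵐ τ ∂(volume.restrict (σ '' Set.Ioo a b)),
        HasDerivAt 𝔰 (lam (𝔰 τ)) τ) ∧
      (∀ᵐ τ ∂(volume.restrict (σ '' Set.Ioo a b)),
        HasDerivAt (fun τ' => θ (𝔰 τ')) (-gradient E (θ (𝔰 τ))) τ) := by
  have hbdd := exists_abs_one_div_le_on_Icc hlamlb
  have hint : ∀ u ∈ Ioo a b, ∀ v ∈ Ioo a b, IntervalIntegrable (fun r => 1 / lam r) volume u v :=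
    fun u hu v hv => intervalIntegrable_of_bounded_on_Icc
      (measurable_const.div hlammeas).aestronglyMeasurable hbdd hu hv
  have hlip := lipschitzOnWith_Icc_of_eq_integral hsbar hint hσ hbdd
  have hmono : StrictMonoOn σ (Ioo a b) :=
    strictMonoOn_of_eq_integral hsbar hint hσ fun s hs => one_div_pos.2 (hlampos s hs)
  have hcont := continuousOn_Ioo_of_lipschitzOnWith_Icc hlip
  have hgood := ae_exists_preimage_of_lipschitzOnWith_Icc hlip
    ((ae_hasDerivAt_of_eq_integral hsbar hint hσ).and (hθderiv.and hflow))
  have hleft : ∀ s ∈ Ioo a b, invFunOn σ (Ioo a b) (σ s) = s :=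
    fun s hs => hmono.injOn.leftInvOn_invFunOn hs
  have hderiv : ∀ᵐ τ ∂volume.restrict (σ '' Ioo a b),
      HasDerivAt (invFunOn σ (Ioo a b)) (lam (invFunOn σ (Ioo a b) τ)) τ ∧
      HasDerivAt (fun τ' => θ (invFunOn σ (Ioo a b) τ'))
        (-gradient E (θ (invFunOn σ (Ioo a b) τ))) τ := by
    refine (ae_restrict_iff' (hmono.isOpen_image_Ioo hcont).measurableSet).2 ?_
    filter_upwards [hgood] with τ hτ hτmem
    obtain ⟨s, hs, ⟨hσs, hθs, hflows⟩, rfl⟩ := hτ hτmem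
    have hne : 1 / lam s ≠ 0 := (one_div_pos.2 (hlampos s hs)).ne'
    rw [hleft s hs, ← eq_neg_of_add_eq_zero_left hflows]
    simpa only [one_div, inv_inv] using And.intro (hmono.hasDerivAt_invFunOn hcont hs hσs hne)
      (hmono.hasDerivAt_comp_invFunOn hcont hs hσs hne hθs)
  exact ⟨hlip, hmono, invFunOn σ (Ioo a b), hleft, (surjOn_image σ _).mapsTo_invFunOn,
    hderiv.mono fun _ h => h.1, hderiv.mono fun _ h => h.2⟩

/-- Reparameterization of a curve satisfying `λ(s) θ'(s) + DE(θ(s)) = 0` to a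
solution of the gradient flow: the time change `σ(s) = ∫_{s̄}^s dr/λ(r)` is
locally Lipschitz and strictly increasing on `(a,b)`, its inverse `𝔰` satisfies
`𝔰'(σ) = λ(𝔰(σ))` a.e., and `θ̃ = θ ∘ 𝔰` is locally absolutely continuous and
solves `θ̃' + DE(θ̃) = 0` a.e. on `(σ(a⁺), σ(b⁻)) = σ''(a,b)`. -/
theorem stmt8
    {X : Type*} [NormedAddCommGroup X] [InnerProductSpace ℝ X] [FiniteDimensional ℝ X]
    (E : X → ℝ) (hE : ContDiff ℝ 1 E)
    (a b : ℝ) (hab : a < b) (θ θ' : ℝ → X)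
    (hLip : ∀ c d : ℝ, a < c → c ≤ d → d < b →
      ∃ K : NNReal, LipschitzOnWith K θ (Set.Icc c d))
    (hθderiv : ∀ᵐ s ∂(volume.restrict (Set.Ioo a b)), HasDerivAt θ (θ' s) s)
    (hnc : ∀ s ∈ Set.Ioo a b, gradient E (θ s) ≠ 0)
    (lam : ℝ → ℝ) (hlammeas : Measurable lam)
    (hlampos : ∀ s ∈ Set.Ioo a b, 0 < lam s)
    (hlamlb : ∀ ρ > 0, a + ρ ≤ b - ρ →
      ∃ lamρ > 0, ∀ s ∈ Set.Icc (a + ρ) (b - ρ), lamρ ≤ lam s)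
    (hflow : ∀ᵐ s ∂(volume.restrict (Set.Ioo a b)),
      lam s • θ' s + gradient E (θ s) = 0)
    (sbar : ℝ) (hsbar : sbar ∈ Set.Ioo a b)
    (σ : ℝ → ℝ) (hσ : ∀ s ∈ Set.Ioo a b, σ s = ∫ r in sbar..s, 1 / lam r) :
    (∀ c d : ℝ, a < c → c ≤ d → d < b → ∃ K : NNReal,
      LipschitzOnWith K σ (Set.Icc c d)) ∧
    StrictMonoOn σ (Set.Ioo a b) ∧
    ∃ 𝔰 : ℝ → ℝ,
      (∀ s ∈ Set.Ioo a b, 𝔰 (σ s) = s) ∧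
      Set.MapsTo 𝔰 (σ '' Set.Ioo a b) (Set.Ioo a b) ∧
      (∀ᵐ τ ∂(volume.restrict (σ '' Set.Ioo a b)),
        HasDerivAt 𝔰 (lam (𝔰 τ)) τ) ∧
      (∀ᵐ τ ∂(volume.restrict (σ '' Set.Ioo a b)),
        HasDerivAt (fun τ' => θ (𝔰 τ')) (-gradient E (θ (𝔰 τ))) τ) :=
  stmt8_general E a b θ θ' hθderiv lam hlammeas hlampos hlamlb hflow sbar hsbar σ hσ
end

section
/- Let X be a finite-dimensional Hilbert space, E : X → [0,∞) of class C¹ with E(x*) = 0, and suppose E satisfies the Łojasiewicz inequality near x*: there exist θ ∈ (0,1), C > 0, R > 0 such that E(v)^θ ≤ C‖DE(v)‖ for all v ∈ B_R(x*). Let θ̃ : [σ₀, σ₁) → X be a locally absolutely continuous solution of the gradient flow θ̃'(σ) + DE(θ̃(σ)) = 0 with θ̃(σ) ∈ B_R(x*) for all σ, and with E(θ̃(σ)) > 0. Then the length of θ̃ is finite: ∫_{σ₀}^{σ̃} ‖θ̃'(σ)‖ dσ ≤ (C/(1−θ))·E(θ̃(σ₀))^{1−θ} for every σ̃ ∈ (σ₀,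 σ₁). -/
/-! Along the flow, `σ ↦ E(θ̃ σ)` decreases at rate `‖∇E‖²`, so the Łojasiewicz inequality
`E^θ ≤ C ‖∇E‖` makes `-(C/(1-θ)) E(θ̃ σ)^(1-θ)` an increasing function whose derivative
`C E^(-θ) ‖∇E‖²` dominates the speed `‖θ̃'‖ = ‖∇E‖`. Integrating, the length is bounded by the
total increase of that function, hence by `C/(1-θ) E(θ̃ σ₀)^(1-θ)`. -/

open MeasureTheory Set intervalIntegral

theorem le_mul_rpow_neg_mul_sq_of_rpow_le_mul {e g θ C : ℝ} (he : 0 < e) (hg : 0 ≤ g)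
    (h : e ^ θ ≤ C * g) : g ≤ C * e ^ (-θ) * g ^ 2 := by
  have heθ : 0 < e ^ θ := Real.rpow_pos_of_pos he θ
  rw [Real.rpow_neg he.le, mul_right_comm, ← div_eq_mul_inv, le_div_iff₀ heθ]
  nlinarith [mul_le_mul_of_nonneg_left h hg]

theorem integral_le_of_lojasiewicz {f g : ℝ → ℝ} {a b θ C : ℝ} (hab : a ≤ b) (hθ : θ < 1)
    (hf_cont : ContinuousOn f (Icc a b)) (hf_pos : ∀ t ∈ Ioo a b, 0 < f t)
    (hf_deriv : ∀ t ∈ Ioo a b, HasDerivAt f (-g t ^ 2) t)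
    (hg_int : IntegrableOn g (Icc a b)) (hg_nonneg : ∀ t ∈ Ioo a b, 0 ≤ g t)
    (hloja : ∀ t ∈ Ioo a b, f t ^ θ ≤ C * g t) :
    ∫ t in a..b, g t ≤ C / (1 - θ) * (f a ^ (1 - θ) - f b ^ (1 - θ)) := by
  have h1θ : 1 - θ ≠ 0 := by linarith
  have hderiv : ∀ t ∈ Ioo a b, HasDerivAt (fun s => -(C / (1 - θ)) * f s ^ (1 - θ))
      (C * f t ^ (-θ) * g t ^ 2) t := by
    intro t ht
    refine (((hf_deriv t ht).rpow_const (.inl (hf_pos t ht).ne')).const_mul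
      (-(C / (1 - θ)))).congr_deriv ?_
    rw [sub_sub_cancel_left]
    field_simp
  calc ∫ t in a..b, g t
      ≤ -(C / (1 - θ)) * f b ^ (1 - θ) - -(C / (1 - θ)) * f a ^ (1 - θ) :=
        integral_le_sub_of_hasDeriv_right_of_le hab
          (continuousOn_const.mul (hf_cont.rpow_const fun _ _ => .inr (by linarith)))
          (fun t ht => (hderiv t ht).hasDerivWithinAt) hg_int
          (fun t ht => le_mul_rpow_neg_mul_sq_of_rpow_le_mul (hf_pos t ht) (hg_nonneg t ht)
            (hloja t ht))
    _ = C / (1 - θ) * (f a ^ (1 - θ) - f b ^ (1 - θ)) := by ring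

section GradientFlow

variable {X : Type*} [NormedAddCommGroup X] [InnerProductSpace ℝ X] [CompleteSpace X]

theorem ContDiff.continuous_gradient {E : X → ℝ} {n : WithTop ℕ∞} (hE : ContDiff ℝ n E)
    (hn : n ≠ 0) :
    Continuous (gradient E) :=
  (InnerProductSpace.toDual ℝ X).symm.continuous.comp (hE.continuous_fderiv hn)

theorem HasDerivAt.hasDerivAt_comp_of_neg_gradient {E : X → ℝ} {γ : ℝ → X} {t : ℝ}
    (hγ : HasDerivAt γ (-gradient E (γ t)) t) (hE : DifferentiableAt ℝ E (γ t)) :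
    HasDerivAt (fun s => E (γ s)) (-‖gradient E (γ t)‖ ^ 2) t := by
  refine (hE.hasGradientAt.hasFDerivAt.comp_hasDerivAt t hγ).congr_deriv ?_
  rw [InnerProductSpace.toDual_apply_apply, inner_neg_right, real_inner_self_eq_norm_sq]

end GradientFlow

theorem stmt10_general
    {X : Type*} [NormedAddCommGroup X] [InnerProductSpace ℝ X] [FiniteDimensional ℝ X]
    (E : X → ℝ) (hE : ContDiff ℝ 1 E)
    (xstar : X)
    (θ C R : ℝ) (hθ : θ ∈ Set.Ioo (0:ℝ) 1) (hC : 0 < C)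
    (hLoja : ∀ v ∈ Metric.ball xstar R, (E v) ^ θ ≤ C * ‖gradient E v‖)
    (σ₀ σ₁ : ℝ) (θt : ℝ → X)
    (hflow : ∀ σ ∈ Set.Ico σ₀ σ₁, HasDerivAt θt (-gradient E (θt σ)) σ)
    (hball : ∀ σ ∈ Set.Ico σ₀ σ₁, θt σ ∈ Metric.ball xstar R)
    (hEpos : ∀ σ ∈ Set.Ico σ₀ σ₁, 0 < E (θt σ)) :
    ∀ σt ∈ Set.Ioo σ₀ σ₁,
      (∫ σ in σ₀..σt, ‖deriv θt σ‖) ≤ (C / (1 - θ)) * (E (θt σ₀)) ^ (1 - θ) := by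
  rintro σt ⟨hσ₀, hσ₁⟩
  have hsub : Icc σ₀ σt ⊆ Ico σ₀ σ₁ := Icc_subset_Ico_right hσ₁
  have hsub' : Ioo σ₀ σt ⊆ Ico σ₀ σ₁ := Ioo_subset_Icc_self.trans hsub
  have hθt : ContinuousOn θt (Icc σ₀ σt) := fun σ hσ =>
    (hflow σ (hsub hσ)).continuousAt.continuousWithinAt
  have hlength : ∫ σ in σ₀..σt, ‖deriv θt σ‖ = ∫ σ in σ₀..σt, ‖gradient E (θt σ)‖ :=
    integral_congr fun σ hσ => by
      rw [uIcc_of_le hσ₀.le] at hσ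
      rw [(hflow σ (hsub hσ)).deriv, norm_neg]
  have hbound := integral_le_of_lojasiewicz hσ₀.le hθ.2 (hE.continuous.comp_continuousOn hθt)
    (fun σ hσ => hEpos σ (hsub' hσ))
    (fun σ hσ => (hflow σ (hsub' hσ)).hasDerivAt_comp_of_neg_gradient
      (hE.differentiable one_ne_zero _))
    ((hE.continuous_gradient one_ne_zero).comp_continuousOn hθt).norm.integrableOn_Icc
    (fun σ _ => norm_nonneg _) (fun σ hσ => hLoja _ (hball σ (hsub' hσ)))
  have hend : 0 ≤ C / (1 - θ) * E (θt σt) ^ (1 - θ) :=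
    mul_nonneg (div_nonneg hC.le (sub_nonneg.2 hθ.2.le))
      (Real.rpow_nonneg (hEpos σt ⟨hσ₀.le, hσ₁⟩).le _)
  calc ∫ σ in σ₀..σt, ‖deriv θt σ‖
      = ∫ σ in σ₀..σt, ‖gradient E (θt σ)‖ := hlength
    _ ≤ C / (1 - θ) * (E (θt σ₀) ^ (1 - θ) - E (θt σt) ^ (1 - θ)) := hbound
    _ ≤ C / (1 - θ) * E (θt σ₀) ^ (1 - θ) := by rw [mul_sub]; exact sub_le_self _ hend

/-- Finite length of gradient-flow trajectories under the Łojasiewicz inequality: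
`∫_{σ₀}^{σ̃} ‖θ̃'(σ)‖ dσ ≤ (C/(1-θ)) E(θ̃(σ₀))^{1-θ}`. -/
theorem stmt10
    {X : Type*} [NormedAddCommGroup X] [InnerProductSpace ℝ X] [FiniteDimensional ℝ X]
    (E : X → ℝ) (hE : ContDiff ℝ 1 E) (hEnn : ∀ v, 0 ≤ E v)
    (xstar : X) (hxstar : E xstar = 0)
    (θ C R : ℝ) (hθ : θ ∈ Set.Ioo (0:ℝ) 1) (hC : 0 < C) (hR : 0 < R)
    (hLoja : ∀ v ∈ Metric.ball xstar R, (E v) ^ θ ≤ C * ‖gradient E v‖)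
    (σ₀ σ₁ : ℝ) (hσ : σ₀ < σ₁) (θt : ℝ → X)
    (hflow : ∀ σ ∈ Set.Ico σ₀ σ₁, HasDerivAt θt (-gradient E (θt σ)) σ)
    (hball : ∀ σ ∈ Set.Ico σ₀ σ₁, θt σ ∈ Metric.ball xstar R)
    (hEpos : ∀ σ ∈ Set.Ico σ₀ σ₁, 0 < E (θt σ)) :
    ∀ σt ∈ Set.Ioo σ₀ σ₁,
      (∫ σ in σ₀..σt, ‖deriv θt σ‖) ≤ (C / (1 - θ)) * (E (θt σ₀)) ^ (1 - θ) :=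
  stmt10_general E hE xstar θ C R hθ hC hLoja σ₀ σ₁ θt hflow hball hEpos
end

section
/- Let X be a finite-dimensional Hilbert space, E : [0,T] × X → [0,∞) of class C¹ with power control |∂ₜE(t,u)| ≤ C₁E(t,u) + C₂, and let (εₙ)ₙ be a null sequence with uₙ ∈ H¹(0,T;X) solving εₙuₙ' + DE(t,uₙ) = 0 a.e., with initial data uₙ(0) → u₀. Then there exists a constant C > 0 such that for all n: sup_{t∈[0,T]} E(t,uₙ(t)) ≤ C and ∫₀ᵀ ( (εₙ/2)‖uₙ'(r)‖² + (1/(2εₙ))‖DE(r,uₙ(r))‖² ) dr ≤ C. -/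
open MeasureTheory Filter Set intervalIntegral

/-!
Dropping the (nonnegative) dissipation from the energy identity on `[0, t]` and using the power
control gives `E(t, uₙ t) ≤ E(0, uₙ 0) + ∫₀ᵗ (C₁ E(r, uₙ r) + C₂) dr`, so Grönwall's lemma bounds the
energies uniformly in `n`, because `E(0, uₙ 0)` converges. Feeding this bound back into the energy
identity on `[0, T]`, with `E ≥ 0` at the final time, bounds the dissipation integrals.
-/

theorem le_gronwallBound_of_le_add_integral {g : ℝ → ℝ} {a b δ K c : ℝ} (hK : 0 ≤ K)
    (hg : ContinuousOn g (Icc a b))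
    (hbound : ∀ t ∈ Icc a b, g t ≤ δ + ∫ r in a..t, (K * g r + c)) :
    ∀ t ∈ Icc a b, g t ≤ gronwallBound δ K c (t - a) := by
  -- Grönwall applies to the right-hand side `G`, since `G' = K g + c ≤ K G + c`.
  set G : ℝ → ℝ := fun t => δ + ∫ r in a..t, (K * g r + c)
  have hcont : ContinuousOn (fun r => K * g r + c) (Icc a b) := by fun_prop
  have hG : ∀ x ∈ Icc a b, HasDerivWithinAt G (K * g x + c) (Icc a b) x := by
    intro x hx
    have : Fact (x ∈ Icc a b) := ⟨hx⟩
    exact (integral_hasDerivWithinAt_right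
      ((hcont.mono (Icc_subset_Icc_right hx.2)).intervalIntegrable_of_Icc hx.1)
      (hcont.stronglyMeasurableAtFilter_nhdsWithin measurableSet_Icc x) (hcont x hx)).const_add δ
  have hGle : ∀ t ∈ Icc a b, G t ≤ gronwallBound δ K c (t - a) :=
    le_gronwallBound_of_liminf_deriv_right_le (fun x hx => (hG x hx).continuousWithinAt)
      (fun x hx _ hr => ((hG x (Ico_subset_Icc_self hx)).mono_of_mem_nhdsWithin
        (Icc_mem_nhdsGE_of_mem hx)).liminf_right_slope_le hr)
      (by simp [G])
      (fun x hx => by gcongr; exact hbound x (Ico_subset_Icc_self hx))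
  exact fun t ht => (hbound t ht).trans (hGle t ht)

theorem continuous_uncurry_of_hasDerivAt_of_contDiff {X F : Type*} [NormedAddCommGroup X]
    [NormedSpace ℝ X] [NormedAddCommGroup F] [NormedSpace ℝ F] {E P : ℝ → X → F}
    (hE : ContDiff ℝ 1 (Function.uncurry E)) (hP : ∀ u t, HasDerivAt (fun s => E s u) (P t u) t) :
    Continuous (Function.uncurry P) := by
  have hPeq : Function.uncurry P = fun p => fderiv ℝ (Function.uncurry E) p (1, 0) := by
    ext ⟨t, u⟩
    have hchain := (hE.differentiable one_ne_zero (t, u)).hasFDerivAt.comp_hasDerivAt t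
      ((hasDerivAt_id t).prodMk (hasDerivAt_const t u))
    exact (hP u t).unique hchain
  rw [hPeq]
  exact (hE.continuous_fderiv one_ne_zero).clm_apply continuous_const

section EnergyIdentity

variable {e p d : ℝ → ℝ} {a b C₁ C₂ : ℝ}

theorem le_gronwallBound_of_energy_identity {δ : ℝ} (hC₁ : 0 ≤ C₁)
    (he : ContinuousOn e (Icc a b)) (hp : ContinuousOn p (Icc a b))
    (hd : ∀ r ∈ Icc a b, 0 ≤ d r) (hpe : ∀ r ∈ Icc a b, p r ≤ C₁ * e r + C₂) (hea : e a ≤ δ)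
    (hid : ∀ t ∈ Icc a b, (∫ r in a..t, d r) + e t = e a + ∫ r in a..t, p r) :
    ∀ t ∈ Icc a b, e t ≤ gronwallBound δ C₁ C₂ (t - a) := by
  refine le_gronwallBound_of_le_add_integral hC₁ he fun t ht => ?_
  have hsub : Icc a t ⊆ Icc a b := Icc_subset_Icc_right ht.2
  have hdiss : 0 ≤ ∫ r in a..t, d r := integral_nonneg ht.1 fun r hr => hd r (hsub hr)
  have hpint : ∫ r in a..t, p r ≤ ∫ r in a..t, (C₁ * e r + C₂) :=
    integral_mono_on ht.1 ((hp.mono hsub).intervalIntegrable_of_Icc ht.1)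
      (((he.mono hsub).const_smul C₁).add continuousOn_const |>.intervalIntegrable_of_Icc ht.1)
      fun r hr => hpe r (hsub hr)
  linarith [hid t ht]

theorem integral_le_of_energy_identity {B : ℝ} (hab : a ≤ b) (hC₁ : 0 ≤ C₁)
    (hp : ContinuousOn p (Icc a b)) (heb : 0 ≤ e b) (heB : ∀ r ∈ Icc a b, e r ≤ B)
    (hpe : ∀ r ∈ Icc a b, p r ≤ C₁ * e r + C₂)
    (hid : (∫ r in a..b, d r) + e b = e a + ∫ r in a..b, p r) :
    ∫ r in a..b, d r ≤ e a + (b - a) * (C₁ * B + C₂) := by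
  have hpint : ∫ r in a..b, p r ≤ ∫ _ in a..b, (C₁ * B + C₂) :=
    integral_mono_on hab (hp.intervalIntegrable_of_Icc hab) intervalIntegrable_const
      fun r hr => (hpe r hr).trans (by gcongr; exact heB r hr)
  rw [intervalIntegral.integral_const, smul_eq_mul] at hpint
  linarith

end EnergyIdentity

theorem stmt14_general
    {X : Type*} [NormedAddCommGroup X] [InnerProductSpace ℝ X] [FiniteDimensional ℝ X]
    (T : ℝ) (hT : 0 < T) (E P : ℝ → X → ℝ)
    (hEC1 : ContDiff ℝ 1 (fun p : ℝ × X => E p.1 p.2))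
    (hEnn : ∀ t u, 0 ≤ E t u)
    (hP : ∀ u : X, ∀ t : ℝ, HasDerivAt (fun s => E s u) (P t u) t)
    (C₁ C₂ : ℝ) (hC₁ : 0 < C₁) (hC₂ : 0 < C₂)
    (hpow : ∀ t ∈ Set.Icc (0:ℝ) T, ∀ u : X, |P t u| ≤ C₁ * E t u + C₂)
    (ε : ℕ → ℝ) (hεpos : ∀ n, 0 < ε n)
    (u : ℕ → ℝ → X) (u' : ℕ → ℝ → X)
    (hucont : ∀ n, ContinuousOn (u n) (Set.Icc 0 T))
    -- the energy identity, holding for each solution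
    (hen : ∀ n, ∀ s ∈ Set.Icc (0:ℝ) T, ∀ t ∈ Set.Icc (0:ℝ) T, s ≤ t →
      (∫ r in s..t, ((ε n / 2) * ‖u' n r‖ ^ 2
          + (1 / (2 * ε n)) * ‖gradient (E r) (u n r)‖ ^ 2)) + E t (u n t)
        = E s (u n s) + ∫ r in s..t, P r (u n r))
    -- convergence of the initial data
    (u₀ : X) (hu0 : Filter.Tendsto (fun n => u n 0) Filter.atTop (nhds u₀)) :
    ∃ C > 0, ∀ n,
      (∀ t ∈ Set.Icc (0:ℝ) T, E t (u n t) ≤ C) ∧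
      (∫ r in (0:ℝ)..T, ((ε n / 2) * ‖u' n r‖ ^ 2
          + (1 / (2 * ε n)) * ‖gradient (E r) (u n r)‖ ^ 2)) ≤ C := by
  have hEcont : Continuous (Function.uncurry E) := hEC1.continuous
  have hPcont := continuous_uncurry_of_hasDerivAt_of_contDiff hEC1 hP
  obtain ⟨M, hM⟩ : BddAbove (range fun n => E 0 (u n 0)) :=
    ((hEcont.tendsto _).comp (tendsto_const_nhds.prodMk_nhds hu0)).bddAbove_range
  have hM₀ : 0 ≤ M := (hEnn 0 (u 0 0)).trans (hM ⟨0, rfl⟩)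
  have hmono := gronwallBound_mono hM₀ hC₂.le hC₁.le
  set B := gronwallBound M C₁ C₂ T
  have hMB : M ≤ B := gronwallBound_x0 M C₁ C₂ ▸ hmono hT.le
  have hcurve : ∀ n, ContinuousOn (fun t => (t, u n t)) (Icc 0 T) :=
    fun n => continuousOn_id.prodMk (hucont n)
  have hpe : ∀ n, ∀ r ∈ Icc 0 T, P r (u n r) ≤ C₁ * E r (u n r) + C₂ :=
    fun n r hr => (le_abs_self _).trans (hpow r hr (u n r))
  have hid : ∀ n, ∀ t ∈ Icc 0 T, _ := fun n t ht => hen n 0 ⟨le_rfl, hT.le⟩ t ht ht.1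
  have hEB : ∀ n, ∀ t ∈ Icc 0 T, E t (u n t) ≤ B := fun n t ht => by
    have hgron := le_gronwallBound_of_energy_identity hC₁.le (hEcont.comp_continuousOn (hcurve n))
      (hPcont.comp_continuousOn (hcurve n)) (fun r _ => by have := hεpos n; positivity)
      (hpe n) (hM ⟨n, rfl⟩) (hid n) t ht
    rw [sub_zero] at hgron
    exact hgron.trans (hmono ht.2)
  have hB : 0 ≤ B := hM₀.trans hMB
  have hdrift : 0 < T * (C₁ * B + C₂) := mul_pos hT (by positivity)
  refine ⟨B + T * (C₁ * B + C₂), by positivity, fun n => ⟨fun t ht => ?_, ?_⟩⟩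
  · exact le_add_of_le_of_nonneg (hEB n t ht) hdrift.le
  · have hdiss := integral_le_of_energy_identity hT.le hC₁.le (hPcont.comp_continuousOn (hcurve n))
      (hEnn T _) (hEB n) (hpe n) (hid n T ⟨hT.le, le_rfl⟩)
    linarith [hM ⟨n, rfl⟩, hdiss]

/-- A priori estimates for the viscous gradient flows: uniform energy bound and
uniform bound on the symmetric dissipation integrals. -/
theorem stmt14
    {X : Type*} [NormedAddCommGroup X] [InnerProductSpace ℝ X] [FiniteDimensional ℝ X]
    (T : ℝ) (hT : 0 < T) (E P : ℝ → X → ℝ)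
    (hEC1 : ContDiff ℝ 1 (fun p : ℝ × X => E p.1 p.2))
    (hEnn : ∀ t u, 0 ≤ E t u)
    (hP : ∀ u : X, ∀ t : ℝ, HasDerivAt (fun s => E s u) (P t u) t)
    (C₁ C₂ : ℝ) (hC₁ : 0 < C₁) (hC₂ : 0 < C₂)
    (hpow : ∀ t ∈ Set.Icc (0:ℝ) T, ∀ u : X, |P t u| ≤ C₁ * E t u + C₂)
    (ε : ℕ → ℝ) (hεpos : ∀ n, 0 < ε n) (hε0 : Filter.Tendsto ε Filter.atTop (nhds 0))
    (u : ℕ → ℝ → X) (u' : ℕ → ℝ → X)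
    (hucont : ∀ n, ContinuousOn (u n) (Set.Icc 0 T))
    (huderiv : ∀ n, ∀ᵐ t ∂(volume.restrict (Set.Ioo (0:ℝ) T)),
      HasDerivAt (u n) (u' n t) t)
    -- the gradient flow equation
    (hflow : ∀ n, ∀ᵐ t ∂(volume.restrict (Set.Ioo (0:ℝ) T)),
      ε n • u' n t + gradient (E t) (u n t) = 0)
    -- the energy identity, holding for each solution
    (hen : ∀ n, ∀ s ∈ Set.Icc (0:ℝ) T, ∀ t ∈ Set.Icc (0:ℝ) T, s ≤ t →
      (∫ r in s..t, ((ε n / 2) * ‖u' n r‖ ^ 2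
          + (1 / (2 * ε n)) * ‖gradient (E r) (u n r)‖ ^ 2)) + E t (u n t)
        = E s (u n s) + ∫ r in s..t, P r (u n r))
    -- convergence of the initial data
    (u₀ : X) (hu0 : Filter.Tendsto (fun n => u n 0) Filter.atTop (nhds u₀)) :
    ∃ C > 0, ∀ n,
      (∀ t ∈ Set.Icc (0:ℝ) T, E t (u n t) ≤ C) ∧
      (∫ r in (0:ℝ)..T, ((ε n / 2) * ‖u' n r‖ ^ 2
          + (1 / (2 * ε n)) * ‖gradient (E r) (u n r)‖ ^ 2)) ≤ C :=
  stmt14_general T hT E P hEC1 hEnn hP C₁ C₂ hC₁ hC₂ hpow ε hεpos u u' hucont hen u₀ hu0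
end

section
/- Let μₙ, μ be positive Radon measures on [0,T] with μₙ ⇀* μ, and let 𝓔ₙ(t) → 𝓔(t) pointwise on [0,T] with 𝓔 ∈ BV([0,T]), and Pₙ ⇀* P in L^∞(0,T), satisfying for each n the identity μₙ([s,t]) = 𝓔ₙ(s) − 𝓔ₙ(t) + ∫ₛᵗ Pₙ(r) dr for all 0 ≤ s ≤ t ≤ T. Then μ([s,t]) + 𝓔₊(t) = 𝓔₋(s) + ∫ₛᵗ P(r) dr for all 0 ≤ s ≤ t ≤ T, where 𝓔₋, 𝓔₊ denote left and right limits of 𝓔 (with 𝓔₋(0) := 𝓔(0), 𝓔₊(T) := 𝓔(T)). In particular, μ({t}) = 𝓔₋(t) − 𝓔₊(t) for every t. -/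
/-!
Test the weak convergence `μₙ ⇀ μ` against a continuous bump lying between the indicators of
`[s,t]` and of its `ε`-neighbourhood: this gives `μ[s,t] ≤ lim μₙ[s-ε,t+ε]`, while the portmanteau
inequality for closed sets gives `lim μₙ[s-ε,t+ε] ≤ μ[s-ε,t+ε]`. By the energy
identities the middle limit is `𝓔(s-ε) - 𝓔(t+ε) + ∫_{s-ε}^{t+ε} P` (the interval clipped to
`[0,T]`, which carries the `μₙ`). As `ε → 0⁺` it tends to `𝓔₋(s) - 𝓔₊(t) + ∫ₛᵗ P`, and
`μ[s-ε,t+ε] → μ[s,t]`.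
-/

open MeasureTheory Filter Set
open scoped Topology ENNReal

theorem tendsto_measure_of_tendsto_measureReal {X ι : Type*} [MeasurableSpace X] {L : Filter ι}
    {ν : ι → Measure X} [∀ i, IsFiniteMeasure (ν i)] {F : Set X} {c : ℝ}
    (hc : Tendsto (fun i => (ν i).real F) L (𝓝 c)) :
    Tendsto (fun i => ν i F) L (𝓝 (ENNReal.ofReal c)) := by
  simpa only [measureReal_def, ENNReal.ofReal_toReal (measure_ne_top _ _)]
    using ENNReal.tendsto_ofReal hc

section WeakConvergence

variable {X ι : Type*} [MeasurableSpace X] [PseudoEMetricSpace X] [OpensMeasurableSpace X]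
  {L : Filter ι} {μs : ι → FiniteMeasure X} {μ : FiniteMeasure X}

theorem lintegral_thickenedIndicator_le (ν : Measure X) {δ : ℝ} (hδ : 0 < δ) (E : Set X) :
    ∫⁻ x, (thickenedIndicator hδ E x : ℝ≥0∞) ∂ν ≤ ν (Metric.thickening δ E) := by
  rw [← lintegral_indicator_one Metric.isOpen_thickening.measurableSet]
  refine lintegral_mono fun x => ?_
  by_cases hx : x ∈ Metric.thickening δ E
  · simpa [hx] using thickenedIndicator_le_one hδ E x
  · simp [hx, thickenedIndicator_zero hδ E hx]

theorem FiniteMeasure.measureReal_le_of_tendsto [L.NeBot] (hμ : Tendsto μs L (𝓝 μ))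
    {δ : ℝ} (hδ : 0 < δ) {E F : Set X} (hE : MeasurableSet E)
    (hEF : Metric.thickening δ E ⊆ F) {c : ℝ}
    (hc : Tendsto (fun i => (μs i : Measure X).real F) L (𝓝 c)) :
    (μ : Measure X).real E ≤ c := by
  refine ENNReal.toReal_le_of_le_ofReal (ge_of_tendsto' hc fun i => measureReal_nonneg) ?_
  calc (μ : Measure X) E ≤ ∫⁻ x, (thickenedIndicator hδ E x : ℝ≥0∞) ∂(μ : Measure X) :=
        measure_le_lintegral_thickenedIndicator _ hE hδ
    _ ≤ ENNReal.ofReal c :=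
        le_of_tendsto_of_tendsto' (FiniteMeasure.tendsto_iff_forall_lintegral_tendsto.mp hμ _)
          (tendsto_measure_of_tendsto_measureReal hc)
          fun i => (lintegral_thickenedIndicator_le _ hδ E).trans (measure_mono hEF)

theorem FiniteMeasure.le_measureReal_of_tendsto [L.NeBot] (hμ : Tendsto μs L (𝓝 μ))
    {F : Set X} (hF : IsClosed F) {c : ℝ}
    (hc : Tendsto (fun i => (μs i : Measure X).real F) L (𝓝 c)) :
    c ≤ (μ : Measure X).real F := by
  rw [measureReal_def, ← ENNReal.ofReal_le_iff_le_toReal (measure_ne_top _ _),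
    ← (tendsto_measure_of_tendsto_measureReal hc).limsup_eq]
  exact FiniteMeasure.limsup_measure_closed_le_of_tendsto hμ hF

end WeakConvergence

theorem Real.thickening_Icc_subset (δ a b : ℝ) :
    Metric.thickening δ (Icc a b) ⊆ Icc (a - δ) (b + δ) := by
  intro x hx
  obtain ⟨y, ⟨hay, hyb⟩, hxy⟩ := Metric.mem_thickening_iff.mp hx
  rw [Real.dist_eq, abs_lt] at hxy
  constructor <;> linarith

theorem tendsto_measureReal_Icc_sub_add (μ : Measure ℝ) [IsFiniteMeasure μ] (a b : ℝ) :
    Tendsto (fun ε => μ.real (Icc (a - ε) (b + ε))) (𝓝[>] 0) (𝓝 (μ.real (Icc a b))) := by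
  have hinter : ⋂ ε > (0 : ℝ), Icc (a - ε) (b + ε) = Icc a b := by
    ext x
    simp only [mem_iInter, mem_Icc]
    refine ⟨fun h => ⟨le_of_forall_pos_le_add fun ε hε => ?_,
      le_of_forall_pos_le_add fun ε hε => ?_⟩, fun h ε hε => ⟨by linarith, by linarith⟩⟩
    · linarith [(h ε hε).1]
    · linarith [(h ε hε).2]
  have := tendsto_measure_biInter_gt (μ := μ) (s := fun ε => Icc (a - ε) (b + ε))
    (fun ε _ => measurableSet_Icc.nullMeasurableSet)
    (fun i j _ hij => Icc_subset_Icc (by linarith) (by linarith)) ⟨1, one_pos, measure_ne_top _ _⟩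
  rw [hinter] at this
  exact (ENNReal.tendsto_toReal (measure_ne_top _ _)).comp this

theorem setIntegral_indicator_Icc_one_mul {S : Set ℝ} {a b : ℝ}
    (hab : a ≤ b) (habS : Icc a b ⊆ S) (f : ℝ → ℝ) :
    ∫ r in S, (Icc a b).indicator 1 r * f r = ∫ r in a..b, f r := by
  simp_rw [← indicator_mul_left, Pi.one_apply, one_mul]
  rw [integral_indicator measurableSet_Icc, Measure.restrict_restrict measurableSet_Icc,
    inter_eq_left.mpr habS, intervalIntegral.integral_of_le hab, integral_Icc_eq_integral_Ioc]

theorem tendsto_intervalIntegral_of_tendsto {α : Type*} {l : Filter α} {f : ℝ → ℝ} {a b x y : ℝ}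
    (hf : IntegrableOn f (Icc a b)) {u v : α → ℝ} (hx : x ∈ Icc a b) (hy : y ∈ Icc a b)
    (hu : Tendsto u l (𝓝[Icc a b] x)) (hv : Tendsto v l (𝓝[Icc a b] y)) :
    Tendsto (fun i => ∫ r in u i..v i, f r) l (𝓝 (∫ r in x..y, f r)) := by
  have hab : a ≤ b := hx.1.trans hx.2
  have hF : ContinuousOn (fun z => ∫ r in a..z, f r) (Icc a b) := by
    have := intervalIntegral.continuousOn_primitive_interval (f := f) (a := a) (b := b)
      (by rwa [uIcc_of_le hab])
    rwa [uIcc_of_le hab] at this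
  have hii : ∀ z ∈ Icc a b, IntervalIntegrable f volume a z := fun z hz =>
    (hf.mono_set (uIcc_subset_Icc (left_mem_Icc.mpr hab) hz)).intervalIntegrable
  have hsub : ∀ z ∈ Icc a b, ∀ w ∈ Icc a b,
      ∫ r in z..w, f r = (∫ r in a..w, f r) - ∫ r in a..z, f r :=
    fun z hz w hw => (intervalIntegral.integral_interval_sub_left (hii w hw) (hii z hz)).symm
  rw [hsub x hx y hy]
  refine (((hF y hy).tendsto.comp hv).sub ((hF x hx).tendsto.comp hu)).congr' ?_
  filter_upwards [(tendsto_nhdsWithin_iff.mp hu).2, (tendsto_nhdsWithin_iff.mp hv).2]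
    with i hui hvi
  exact (hsub _ hui _ hvi).symm

theorem max_zero_sub_mem_Icc {T s ε : ℝ} (hs : s ∈ Icc 0 T) (hε : 0 ≤ ε) :
    max 0 (s - ε) ∈ Icc 0 T :=
  ⟨le_max_left _ _, max_le (hs.1.trans hs.2) (by linarith [hs.2])⟩

theorem min_add_mem_Icc {T t ε : ℝ} (ht : t ∈ Icc 0 T) (hε : 0 ≤ ε) :
    min T (t + ε) ∈ Icc 0 T :=
  ⟨le_min (ht.1.trans ht.2) (by linarith [ht.1]), min_le_left _ _⟩

theorem tendsto_max_zero_sub_nhdsGT {T s : ℝ} (hs : s ∈ Icc 0 T) :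
    Tendsto (fun ε => max 0 (s - ε)) (𝓝[>] 0) (𝓝[Icc 0 T] s) := by
  have hcont : Tendsto (fun ε => max 0 (s - ε)) (𝓝 0) (𝓝 s) := by
    have := (show Continuous fun ε : ℝ => max 0 (s - ε) by fun_prop).tendsto 0
    rwa [sub_zero, max_eq_right hs.1] at this
  refine tendsto_nhdsWithin_iff.mpr ⟨tendsto_nhdsWithin_of_tendsto_nhds hcont, ?_⟩
  filter_upwards [self_mem_nhdsWithin] with ε (hε : 0 < ε)
  exact max_zero_sub_mem_Icc hs hε.le

theorem tendsto_min_add_nhdsGT {T t : ℝ} (ht : t ∈ Icc 0 T) :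
    Tendsto (fun ε => min T (t + ε)) (𝓝[>] 0) (𝓝[Icc 0 T] t) := by
  have hcont : Tendsto (fun ε => min T (t + ε)) (𝓝 0) (𝓝 t) := by
    have := (show Continuous fun ε : ℝ => min T (t + ε) by fun_prop).tendsto 0
    rwa [add_zero, min_eq_right ht.2] at this
  refine tendsto_nhdsWithin_iff.mpr ⟨tendsto_nhdsWithin_of_tendsto_nhds hcont, ?_⟩
  filter_upwards [self_mem_nhdsWithin] with ε (hε : 0 < ε)
  exact min_add_mem_Icc ht hε.le

theorem tendsto_comp_max_zero_sub_nhdsGT {f fm : ℝ → ℝ} {T : ℝ}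
    (hfm : ∀ t ∈ Ioc 0 T, Tendsto f (𝓝[Ico 0 t] t) (𝓝 (fm t))) (hfm0 : fm 0 = f 0)
    {s : ℝ} (hs : s ∈ Icc 0 T) :
    Tendsto (fun ε => f (max 0 (s - ε))) (𝓝[>] 0) (𝓝 (fm s)) := by
  rcases hs.1.eq_or_lt with rfl | hs₀
  · rw [hfm0]
    refine tendsto_const_nhds.congr' ?_
    filter_upwards [self_mem_nhdsWithin] with ε (hε : 0 < ε)
    rw [max_eq_left (by linarith)]
  · refine (hfm s ⟨hs₀, hs.2⟩).comp (tendsto_nhdsWithin_iff.mpr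
      ⟨(tendsto_max_zero_sub_nhdsGT hs).mono_right nhdsWithin_le_nhds, ?_⟩)
    filter_upwards [Ioo_mem_nhdsGT hs₀] with ε hε
    rw [max_eq_right (by linarith [hε.2])]
    exact ⟨by linarith [hε.2], by linarith [hε.1]⟩

theorem tendsto_comp_min_add_nhdsGT {f fp : ℝ → ℝ} {T : ℝ}
    (hfp : ∀ t ∈ Ico 0 T, Tendsto f (𝓝[Ioc t T] t) (𝓝 (fp t))) (hfpT : fp T = f T)
    {t : ℝ} (ht : t ∈ Icc 0 T) :
    Tendsto (fun ε => f (min T (t + ε))) (𝓝[>] 0) (𝓝 (fp t)) := by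
  rcases ht.2.eq_or_lt with rfl | htT
  · rw [hfpT]
    refine tendsto_const_nhds.congr' ?_
    filter_upwards [self_mem_nhdsWithin] with ε (hε : 0 < ε)
    rw [min_eq_left (by linarith)]
  · refine (hfp t ⟨ht.1, htT⟩).comp (tendsto_nhdsWithin_iff.mpr
      ⟨(tendsto_min_add_nhdsGT ht).mono_right nhdsWithin_le_nhds, ?_⟩)
    filter_upwards [Ioo_mem_nhdsGT (sub_pos.mpr htT)] with ε hε
    rw [min_eq_right (by linarith [hε.2])]
    exact ⟨by linarith [hε.1], by linarith [hε.2]⟩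

theorem FiniteMeasure.measureReal_Icc_eq_of_tendsto {ι : Type*} {l : Filter ι} [l.NeBot]
    {μs : ι → FiniteMeasure ℝ} {μ : FiniteMeasure ℝ} (hμ : Tendsto μs l (𝓝 μ)) {T : ℝ}
    (hsupp : ∀ i, (μs i : Measure ℝ) (Icc 0 T)ᶜ = 0) {m : ℝ → ℝ → ℝ}
    (hm : ∀ a ∈ Icc 0 T, ∀ b ∈ Icc 0 T, a ≤ b →
      Tendsto (fun i => (μs i : Measure ℝ).real (Icc a b)) l (𝓝 (m a b)))
    {s t L : ℝ} (hs : s ∈ Icc 0 T) (ht : t ∈ Icc 0 T) (hst : s ≤ t)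
    (hL : Tendsto (fun ε => m (max 0 (s - ε)) (min T (t + ε))) (𝓝[>] 0) (𝓝 L)) :
    (μ : Measure ℝ).real (Icc s t) = L := by
  have hclipped : ∀ ε > 0,
      Tendsto (fun i => (μs i : Measure ℝ).real (Icc (max 0 (s - ε)) (min T (t + ε)))) l
        (𝓝 (m (max 0 (s - ε)) (min T (t + ε)))) := fun ε hε =>
    hm _ (max_zero_sub_mem_Icc hs hε.le) _ (min_add_mem_Icc ht hε.le)
      ((max_le hs.1 (by linarith)).trans (hst.trans (le_min ht.2 (by linarith))))
  have hupper : ∀ ε > 0,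
      (μ : Measure ℝ).real (Icc s t) ≤ m (max 0 (s - ε)) (min T (t + ε)) := by
    intro ε hε
    refine FiniteMeasure.measureReal_le_of_tendsto hμ hε measurableSet_Icc
      (Real.thickening_Icc_subset ε s t) ((hclipped ε hε).congr fun i => ?_)
    rw [measureReal_def, measureReal_def,
      ← measure_inter_conull (s := Icc (s - ε) (t + ε)) (hsupp i), inter_comm, Icc_inter_Icc]
  have hlower : ∀ ε > 0,
      m (max 0 (s - ε)) (min T (t + ε)) ≤ (μ : Measure ℝ).real (Icc (s - ε) (t + ε)) :=
    fun ε hε => (FiniteMeasure.le_measureReal_of_tendsto hμ isClosed_Icc (hclipped ε hε)).trans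
      (measureReal_mono (Icc_subset_Icc (le_max_right _ _) (min_le_right _ _)))
  exact le_antisymm (ge_of_tendsto hL (eventually_nhdsWithin_of_forall hupper))
    (le_of_tendsto_of_tendsto hL (tendsto_measureReal_Icc_sub_add _ s t)
      (eventually_nhdsWithin_of_forall hlower))

theorem stmt16_general
    (T : ℝ)
    (μn : ℕ → Measure ℝ) (μ : Measure ℝ)
    [∀ n, IsFiniteMeasure (μn n)] [IsFiniteMeasure μ]
    (hμnsupp : ∀ n, μn n (Set.Icc (0:ℝ) T)ᶜ = 0)
    -- weak-* convergence of the measures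
    (hweak : ∀ φ : ℝ → ℝ, Continuous φ →
      Filter.Tendsto (fun n => ∫ x, φ x ∂(μn n)) Filter.atTop (nhds (∫ x, φ x ∂μ)))
    (𝓔n : ℕ → ℝ → ℝ) (𝓔 : ℝ → ℝ)
    (hEcv : ∀ t ∈ Set.Icc (0:ℝ) T,
      Filter.Tendsto (fun n => 𝓔n n t) Filter.atTop (nhds (𝓔 t)))
    (Pn : ℕ → ℝ → ℝ) (P : ℝ → ℝ)
    (hPint : MeasureTheory.IntegrableOn P (Set.Icc 0 T))
    -- weak-* convergence Pₙ ⇀* P in L∞(0,T)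
    (hPweak : ∀ φ : ℝ → ℝ, MeasureTheory.IntegrableOn φ (Set.Icc 0 T) →
      Filter.Tendsto (fun n => ∫ r in Set.Icc (0:ℝ) T, φ r * Pn n r) Filter.atTop
        (nhds (∫ r in Set.Icc (0:ℝ) T, φ r * P r)))
    -- one-sided limits of 𝓔, with the stated conventions at the endpoints
    (𝓔m 𝓔p : ℝ → ℝ)
    (h𝓔m : ∀ t ∈ Set.Ioc (0:ℝ) T,
      Filter.Tendsto 𝓔 (nhdsWithin t (Set.Ico 0 t)) (nhds (𝓔m t)))
    (h𝓔m0 : 𝓔m 0 = 𝓔 0)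
    (h𝓔p : ∀ t ∈ Set.Ico (0:ℝ) T,
      Filter.Tendsto 𝓔 (nhdsWithin t (Set.Ioc t T)) (nhds (𝓔p t)))
    (h𝓔pT : 𝓔p T = 𝓔 T)
    -- the approximate energy identities
    (hid : ∀ n, ∀ s ∈ Set.Icc (0:ℝ) T, ∀ t ∈ Set.Icc (0:ℝ) T, s ≤ t →
      ((μn n) (Set.Icc s t)).toReal
        = 𝓔n n s - 𝓔n n t + ∫ r in s..t, Pn n r) :
    (∀ s ∈ Set.Icc (0:ℝ) T, ∀ t ∈ Set.Icc (0:ℝ) T, s ≤ t →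
      (μ (Set.Icc s t)).toReal + 𝓔p t = 𝓔m s + ∫ r in s..t, P r) ∧
    (∀ t ∈ Set.Icc (0:ℝ) T, (μ {t}).toReal = 𝓔m t - 𝓔p t) := by
  let μs : ℕ → FiniteMeasure ℝ := fun n => ⟨μn n, inferInstance⟩
  let μ' : FiniteMeasure ℝ := ⟨μ, inferInstance⟩
  have hμ : Tendsto μs atTop (𝓝 μ') :=
    FiniteMeasure.tendsto_iff_forall_integral_tendsto.mpr fun f => hweak f f.continuous
  have hmass : ∀ a ∈ Icc 0 T, ∀ b ∈ Icc 0 T, a ≤ b → Tendsto (fun n => (μn n).real (Icc a b))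
      atTop (𝓝 (𝓔 a - 𝓔 b + ∫ r in a..b, P r)) := by
    intro a ha b hb hab
    have hP := hPweak ((Icc a b).indicator 1)
      ((integrableOn_const measure_Icc_lt_top.ne).indicator measurableSet_Icc)
    simp only [setIntegral_indicator_Icc_one_mul hab (Icc_subset_Icc ha.1 hb.2)] at hP
    exact (((hEcv a ha).sub (hEcv b hb)).add hP).congr fun n => (hid n a ha b hb hab).symm
  have key : ∀ s ∈ Icc 0 T, ∀ t ∈ Icc 0 T, s ≤ t →
      μ.real (Icc s t) = 𝓔m s - 𝓔p t + ∫ r in s..t, P r := fun s hs t ht hst =>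
    FiniteMeasure.measureReal_Icc_eq_of_tendsto hμ hμnsupp hmass hs ht hst
      (((tendsto_comp_max_zero_sub_nhdsGT h𝓔m h𝓔m0 hs).sub
        (tendsto_comp_min_add_nhdsGT h𝓔p h𝓔pT ht)).add
        (tendsto_intervalIntegral_of_tendsto hPint hs ht
          (tendsto_max_zero_sub_nhdsGT hs) (tendsto_min_add_nhdsGT ht)))
  refine ⟨fun s hs t ht hst => ?_, fun t ht => ?_⟩
  · linarith [key s hs t ht hst, measureReal_def μ (Icc s t)]
  · have := key t ht t ht le_rfl
    rw [Icc_self, intervalIntegral.integral_same, measureReal_def] at this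
    linarith

/-- Passage to the limit in the approximate energy identities: from
`μₙ([s,t]) = 𝓔ₙ(s) - 𝓔ₙ(t) + ∫ₛᵗ Pₙ` and the convergences `μₙ ⇀* μ`,
`𝓔ₙ → 𝓔` pointwise, `Pₙ ⇀* P`, one obtains
`μ([s,t]) + 𝓔₊(t) = 𝓔₋(s) + ∫ₛᵗ P`; in particular `μ({t}) = 𝓔₋(t) - 𝓔₊(t)`. -/
theorem stmt16
    (T : ℝ) (hT : 0 < T)
    (μn : ℕ → Measure ℝ) (μ : Measure ℝ)
    [∀ n, IsFiniteMeasure (μn n)] [IsFiniteMeasure μ]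
    (hμnsupp : ∀ n, μn n (Set.Icc (0:ℝ) T)ᶜ = 0) (hμsupp : μ (Set.Icc (0:ℝ) T)ᶜ = 0)
    -- weak-* convergence of the measures
    (hweak : ∀ φ : ℝ → ℝ, Continuous φ →
      Filter.Tendsto (fun n => ∫ x, φ x ∂(μn n)) Filter.atTop (nhds (∫ x, φ x ∂μ)))
    (𝓔n : ℕ → ℝ → ℝ) (𝓔 : ℝ → ℝ)
    (hEbv : BoundedVariationOn 𝓔 (Set.Icc 0 T))
    (hEcv : ∀ t ∈ Set.Icc (0:ℝ) T,
      Filter.Tendsto (fun n => 𝓔n n t) Filter.atTop (nhds (𝓔 t)))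
    (Pn : ℕ → ℝ → ℝ) (P : ℝ → ℝ)
    (hPbd : ∃ M, ∀ n, ∀ᵐ r ∂(volume.restrict (Set.Icc (0:ℝ) T)), |Pn n r| ≤ M)
    (hPint : MeasureTheory.IntegrableOn P (Set.Icc 0 T))
    -- weak-* convergence Pₙ ⇀* P in L∞(0,T)
    (hPweak : ∀ φ : ℝ → ℝ, MeasureTheory.IntegrableOn φ (Set.Icc 0 T) →
      Filter.Tendsto (fun n => ∫ r in Set.Icc (0:ℝ) T, φ r * Pn n r) Filter.atTop
        (nhds (∫ r in Set.Icc (0:ℝ) T, φ r * P r)))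
    -- one-sided limits of 𝓔, with the stated conventions at the endpoints
    (𝓔m 𝓔p : ℝ → ℝ)
    (h𝓔m : ∀ t ∈ Set.Ioc (0:ℝ) T,
      Filter.Tendsto 𝓔 (nhdsWithin t (Set.Ico 0 t)) (nhds (𝓔m t)))
    (h𝓔m0 : 𝓔m 0 = 𝓔 0)
    (h𝓔p : ∀ t ∈ Set.Ico (0:ℝ) T,
      Filter.Tendsto 𝓔 (nhdsWithin t (Set.Ioc t T)) (nhds (𝓔p t)))
    (h𝓔pT : 𝓔p T = 𝓔 T)
    -- the approximate energy identities
    (hid : ∀ n, ∀ s ∈ Set.Icc (0:ℝ) T, ∀ t ∈ Set.Icc (0:ℝ) T, s ≤ t →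
      ((μn n) (Set.Icc s t)).toReal
        = 𝓔n n s - 𝓔n n t + ∫ r in s..t, Pn n r) :
    (∀ s ∈ Set.Icc (0:ℝ) T, ∀ t ∈ Set.Icc (0:ℝ) T, s ≤ t →
      (μ (Set.Icc s t)).toReal + 𝓔p t = 𝓔m s + ∫ r in s..t, P r) ∧
    (∀ t ∈ Set.Icc (0:ℝ) T, (μ {t}).toReal = 𝓔m t - 𝓔p t) :=
  stmt16_general T μn μ hμnsupp hweak 𝓔n 𝓔 hEcv Pn P hPint hPweak 𝓔m 𝓔p h𝓔m h𝓔m0 h𝓔p h𝓔pT hid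
end
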